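/- Let n, m be positive integers, let ρ > 0, let a ∈ ℝⁿ with a ≠ 0, let R be an invertible n×n real matrix, and let u ∈ ℝᵐ be a unit vector (‖u‖ = 1). Define Δ* := (ρ / ‖R⁻¹a‖) · u (R⁻¹a)ᵀ R⁻¹ ∈ ℝ^{m×n}. Then ‖Δ* R‖_F = ρ and ‖Δ* a‖ = ρ‖R⁻¹a‖; hence Δ* attains the supremum of ‖Δa‖ over {Δ ∈ ℝ^{m×n} : ‖ΔR‖_F ≤ ρ}. -/

import Mathlib

open Matrix
open scoped BigOperators

/-- Euclidean norm of a real vector. -/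
noncomputable def euclNorm {k : ℕ} (v : Fin k → ℝ) : ℝ :=
  Real.sqrt (∑ i, (v i) ^ 2)

/-- Frobenius norm of a real matrix. -/
noncomputable def frobNorm {m n : ℕ} (A : Matrix (Fin m) (Fin n) ℝ) : ℝ :=
  Real.sqrt (∑ i, ∑ j, (A i j) ^ 2)

/-!
With `w = R⁻¹ a` every `Δ` satisfies `Δ a = (Δ R) w`, so Cauchy–Schwarz applied row by row
gives `‖Δ a‖ ≤ ‖Δ R‖_F ‖w‖ ≤ ρ ‖w‖`. The matrix `Δ*` is chosen so that
`Δ* R = (ρ / ‖w‖) u wᵀ`, a rank-one matrix whose rows are all parallel to `w`; for it both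
inequalities are equalities.
-/

section Norms

variable {k m n : ℕ}

lemma sq_euclNorm (v : Fin k → ℝ) : euclNorm v ^ 2 = ∑ i, v i ^ 2 :=
  Real.sq_sqrt (Finset.sum_nonneg fun _ _ => sq_nonneg _)

lemma dotProduct_self_eq_sq_euclNorm (v : Fin k → ℝ) : v ⬝ᵥ v = euclNorm v ^ 2 := by
  rw [sq_euclNorm]
  simp only [dotProduct, sq]

lemma euclNorm_pos {v : Fin k → ℝ} (hv : v ≠ 0) : 0 < euclNorm v := by
  obtain ⟨i, hi⟩ := Function.ne_iff.1 hv
  refine Real.sqrt_pos.2 (Finset.sum_pos' (fun _ _ => sq_nonneg _) ⟨i, Finset.mem_univ i, ?_⟩)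
  exact sq_pos_of_ne_zero hi

lemma euclNorm_smul (c : ℝ) (v : Fin k → ℝ) : euclNorm (c • v) = |c| * euclNorm v := by
  rw [euclNorm, euclNorm, ← Real.sqrt_sq_eq_abs, ← Real.sqrt_mul (sq_nonneg c), Finset.mul_sum]
  simp only [Pi.smul_apply, smul_eq_mul, mul_pow]

lemma frobNorm_smul (c : ℝ) (A : Matrix (Fin m) (Fin n) ℝ) :
    frobNorm (c • A) = |c| * frobNorm A := by
  rw [frobNorm, frobNorm, ← Real.sqrt_sq_eq_abs, ← Real.sqrt_mul (sq_nonneg c), Finset.mul_sum]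
  simp only [Finset.mul_sum, Matrix.smul_apply, smul_eq_mul, mul_pow]

lemma frobNorm_vecMulVec (u : Fin m → ℝ) (v : Fin n → ℝ) :
    frobNorm (vecMulVec u v) = euclNorm u * euclNorm v := by
  rw [frobNorm, euclNorm, euclNorm, ← Real.sqrt_mul (Finset.sum_nonneg fun _ _ => sq_nonneg _),
    Finset.sum_mul_sum]
  simp only [vecMulVec_apply, mul_pow]

lemma euclNorm_vecMulVec_mulVec (u : Fin m → ℝ) (v w : Fin n → ℝ) :
    euclNorm (vecMulVec u v *ᵥ w) = |v ⬝ᵥ w| * euclNorm u := by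
  rw [vecMulVec_mulVec, op_smul_eq_smul, euclNorm_smul]

lemma euclNorm_mulVec_le (B : Matrix (Fin m) (Fin n) ℝ) (w : Fin n → ℝ) :
    euclNorm (B *ᵥ w) ≤ frobNorm B * euclNorm w := by
  rw [euclNorm, frobNorm, euclNorm,
    ← Real.sqrt_mul (Finset.sum_nonneg fun i _ => Finset.sum_nonneg fun j _ => sq_nonneg (B i j)),
    Finset.sum_mul]
  refine Real.sqrt_le_sqrt (Finset.sum_le_sum fun i _ => ?_)
  exact Finset.sum_mul_sq_le_sq_mul_sq Finset.univ (B i) w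

end Norms

theorem robust_inner_problem_attained_b_zero_general
    (n m : ℕ)
    (ρ : ℝ) (hρ : 0 < ρ)
    (a : Fin n → ℝ) (ha : a ≠ 0)
    (R : Matrix (Fin n) (Fin n) ℝ) (hR : IsUnit R.det)
    (u : Fin m → ℝ) (hu : euclNorm u = 1)
    (Δstar : Matrix (Fin m) (Fin n) ℝ)
    (hΔstar : Δstar =
      (ρ / euclNorm (R⁻¹ *ᵥ a)) • (vecMulVec u (R⁻¹ *ᵥ a) * R⁻¹)) :
    frobNorm (Δstar * R) = ρ ∧
      euclNorm (Δstar *ᵥ a) = ρ * euclNorm (R⁻¹ *ᵥ a) ∧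
      ∀ Δ : Matrix (Fin m) (Fin n) ℝ, frobNorm (Δ * R) ≤ ρ →
        euclNorm (Δ *ᵥ a) ≤ euclNorm (Δstar *ᵥ a) := by
  set w := R⁻¹ *ᵥ a
  have hRw : R *ᵥ w = a := by rw [mulVec_mulVec, mul_nonsing_inv R hR, one_mulVec]
  have hΔa (Δ : Matrix (Fin m) (Fin n) ℝ) : Δ *ᵥ a = (Δ * R) *ᵥ w := by
    rw [← hRw, mulVec_mulVec]
  have hw : 0 < euclNorm w := euclNorm_pos fun h => ha (by rw [← hRw, h, mulVec_zero])
  have hΔR : Δstar * R = (ρ / euclNorm w) • vecMulVec u w := by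
    rw [hΔstar, Matrix.smul_mul, Matrix.mul_assoc, nonsing_inv_mul R hR, Matrix.mul_one]
  have hval : euclNorm (Δstar *ᵥ a) = ρ * euclNorm w := by
    rw [hΔa, hΔR, smul_mulVec, euclNorm_smul, euclNorm_vecMulVec_mulVec,
      dotProduct_self_eq_sq_euclNorm, hu, abs_of_pos (div_pos hρ hw), abs_of_pos (by positivity)]
    field_simp
  refine ⟨?_, hval, fun Δ hΔ => ?_⟩
  · rw [hΔR, frobNorm_smul, frobNorm_vecMulVec, hu, abs_of_pos (div_pos hρ hw)]
    field_simp
  · rw [hval, hΔa]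
    exact (euclNorm_mulVec_le _ _).trans (mul_le_mul_of_nonneg_right hΔ hw.le)

/-- Case b = 0 of Lemma 2: Δ* = (ρ/‖R⁻¹a‖) u (R⁻¹a)ᵀ R⁻¹ satisfies
‖Δ*R‖_F = ρ and ‖Δ*a‖ = ρ‖R⁻¹a‖, hence attains the supremum of ‖Δa‖ over
{Δ : ‖ΔR‖_F ≤ ρ}. -/
theorem robust_inner_problem_attained_b_zero
    (n m : ℕ) (hn : 0 < n) (hm : 0 < m)
    (ρ : ℝ) (hρ : 0 < ρ)
    (a : Fin n → ℝ) (ha : a ≠ 0)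
    (R : Matrix (Fin n) (Fin n) ℝ) (hR : IsUnit R.det)
    (u : Fin m → ℝ) (hu : euclNorm u = 1)
    (Δstar : Matrix (Fin m) (Fin n) ℝ)
    (hΔstar : Δstar =
      (ρ / euclNorm (R⁻¹ *ᵥ a)) • (vecMulVec u (R⁻¹ *ᵥ a) * R⁻¹)) :
    frobNorm (Δstar * R) = ρ ∧
      euclNorm (Δstar *ᵥ a) = ρ * euclNorm (R⁻¹ *ᵥ a) ∧
      ∀ Δ : Matrix (Fin m) (Fin n) ℝ, frobNorm (Δ * R) ≤ ρ →
        euclNorm (Δ *ᵥ a) ≤ euclNorm (Δstar *ᵥ a) :=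
  robust_inner_problem_attained_b_zero_general n m ρ hρ a ha R hR u hu Δstar hΔstar
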